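/- arXiv:1907.12096 — 4 statements merged into one kernel-verified Lean document; each statement's English description precedes it below -/
import Mathlib

section
/- Let b : ℝ → ℝ be nonnegative, locally Lipschitz and nondecreasing on (0,∞), let g : [0,∞) → ℝ be continuous, and let a ≥ 0. Suppose X : [0,T) → ℝ satisfies X(t) = a + ∫₀ᵗ b(X(s)) ds + g(t) and blows up at the finite time T < ∞. Then ∫_c^∞ 1/b(s) ds < ∞ for some (equivalently, any sufficiently large) c > 0. -/
open MeasureTheory Set Filter Topology
open scoped ENNReal

/-! Let `G` bound `|g|` on `[0, T]`. Along the solution, `Y = X - g` is nondecreasing with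
`Y' = b(X)` and `|X - Y| ≤ G`. Let `τₖ` be a time at which `Y` reaches the level `G + c 2ᵏ`, where
`c > 0` is so large that `Y(0) = a ≤ G + c`. On `[τₖ, τₖ₊₁]` we have `0 < X ≤ Bₖ := 2G + c 2ᵏ⁺¹`,
so `c 2ᵏ ≤ (τₖ₊₁ - τₖ) b(Bₖ)`. Since `b` is nondecreasing,
`∫_{Bₖ}^{Bₖ₊₁} ds / b(s) ≤ (Bₖ₊₁ - Bₖ) / b(Bₖ) ≤ 2 (τₖ₊₁ - τₖ)`, and these bounds telescope
to at most `2T`. -/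

section Osgood

variable {b : ℝ → ℝ}

theorem setLIntegral_Ioc_inv_le (hbmono : MonotoneOn b (Ioi 0)) {u v : ℝ} (hu : 0 < u) :
    ∫⁻ s in Ioc u v, (ENNReal.ofReal (b s))⁻¹ ≤ ENNReal.ofReal (v - u) / ENNReal.ofReal (b u) := by
  calc ∫⁻ s in Ioc u v, (ENNReal.ofReal (b s))⁻¹
      ≤ ∫⁻ _ in Ioc u v, (ENNReal.ofReal (b u))⁻¹ := by
        refine setLIntegral_mono measurable_const fun s hs => ?_
        have hbs : b u ≤ b s := hbmono hu (hu.trans hs.1) hs.1.le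
        exact ENNReal.inv_le_inv.2 (ENNReal.ofReal_le_ofReal hbs)
    _ = ENNReal.ofReal (v - u) / ENNReal.ofReal (b u) := by
        rw [setLIntegral_const, Real.volume_Ioc, ENNReal.div_eq_inv_mul]

theorem lintegral_Ioi_inv_le_tsum (hbmono : MonotoneOn b (Ioi 0)) {B : ℕ → ℝ} (hB0 : 0 < B 0)
    (hB : Monotone B) (hBtop : Tendsto B atTop atTop) :
    ∫⁻ s in Ioi (B 0), (ENNReal.ofReal (b s))⁻¹ ≤
      ∑' k, ENNReal.ofReal (B (k + 1) - B k) / ENNReal.ofReal (b (B k)) := by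
  have hcover : ⋃ k, Ioc (B k) (B (k + 1)) = Ioi (B 0) := by
    simpa only [Order.succ_eq_add_one, Nat.bot_eq_zero] using
      iUnion_Ioc_map_succ_eq_Ioi (fun k => hB (Nat.zero_le k)) (not_bddAbove_of_tendsto_atTop hBtop)
  calc ∫⁻ s in Ioi (B 0), (ENNReal.ofReal (b s))⁻¹
      ≤ ∑' k, ∫⁻ s in Ioc (B k) (B (k + 1)), (ENNReal.ofReal (b s))⁻¹ :=
        hcover ▸ lintegral_iUnion_le _ _
    _ ≤ _ := ENNReal.tsum_le_tsum fun k =>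
        setLIntegral_Ioc_inv_le hbmono (hB0.trans_le (hB (Nat.zero_le k)))

theorem tsum_ofReal_sub_le {τ : ℕ → ℝ} (hτ : Monotone τ) {T : ℝ} (hτT : ∀ k, τ k ≤ T) :
    ∑' k, ENNReal.ofReal (τ (k + 1) - τ k) ≤ ENNReal.ofReal (T - τ 0) := by
  refine ENNReal.tsum_le_of_sum_range_le fun n => ?_
  rw [← ENNReal.ofReal_sum_of_nonneg fun k _ => sub_nonneg.2 (hτ k.le_succ), Finset.sum_range_sub]
  exact ENNReal.ofReal_le_ofReal (by linarith [hτT n])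

theorem lintegral_Ioi_inv_lt_top_of_le_mul (hb0 : ∀ x, 0 ≤ b x) (hbmono : MonotoneOn b (Ioi 0))
    {B τ : ℕ → ℝ} (hB0 : 0 < B 0) (hB : Monotone B) (hBtop : Tendsto B atTop atTop)
    (hτ : Monotone τ) {T : ℝ} (hτT : ∀ k, τ k ≤ T) {C : ℝ}
    (h : ∀ k, B (k + 1) - B k ≤ C * (τ (k + 1) - τ k) * b (B k)) :
    ∫⁻ s in Ioi (B 0), (ENNReal.ofReal (b s))⁻¹ < ⊤ := by
  have hterm : ∀ k, ENNReal.ofReal (B (k + 1) - B k) / ENNReal.ofReal (b (B k)) ≤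
      ENNReal.ofReal C * ENNReal.ofReal (τ (k + 1) - τ k) := fun k => by
    refine ENNReal.div_le_of_le_mul ?_
    rw [← ENNReal.ofReal_mul' (sub_nonneg.2 (hτ k.le_succ)), ← ENNReal.ofReal_mul' (hb0 _)]
    exact ENNReal.ofReal_le_ofReal (h k)
  calc ∫⁻ s in Ioi (B 0), (ENNReal.ofReal (b s))⁻¹
      ≤ ∑' k, ENNReal.ofReal C * ENNReal.ofReal (τ (k + 1) - τ k) :=
        (lintegral_Ioi_inv_le_tsum hbmono hB0 hB hBtop).trans (ENNReal.tsum_le_tsum hterm)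
    _ ≤ ENNReal.ofReal C * ENNReal.ofReal (T - τ 0) := by
        rw [ENNReal.tsum_mul_left]
        gcongr
        exact tsum_ofReal_sub_le hτ hτT
    _ < ⊤ := ENNReal.mul_lt_top ENNReal.ofReal_lt_top ENNReal.ofReal_lt_top

end Osgood

section IntegralEquation

variable {b g X : ℝ → ℝ} {a T : ℝ}

theorem integral_eq_sub_of_eq_integral (hb : Continuous b) (hXcont : ContinuousOn X (Ico 0 T))
    (hX : ∀ t ∈ Ico (0:ℝ) T, X t = a + (∫ s in (0:ℝ)..t, b (X s)) + g t)
    {t₁ t₂ : ℝ} (h₁ : t₁ ∈ Ico 0 T) (h₂ : t₂ ∈ Ico 0 T) :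
    ∫ s in t₁..t₂, b (X s) = (X t₂ - g t₂) - (X t₁ - g t₁) := by
  have hint : ∀ {t}, t ∈ Ico 0 T → IntervalIntegrable (fun s => b (X s)) volume 0 t := fun ht =>
    ((hb.comp_continuousOn hXcont).mono
      (ordConnected_Ico.uIcc_subset (left_mem_Ico.2 (h₁.1.trans_lt h₁.2)) ht)).intervalIntegrable
  rw [← intervalIntegral.integral_interval_sub_left (hint h₂) (hint h₁), hX t₁ h₁, hX t₂ h₂]
  ring

theorem monotoneOn_sub_of_eq_integral (hb0 : ∀ x, 0 ≤ b x) (hb : Continuous b)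
    (hXcont : ContinuousOn X (Ico 0 T))
    (hX : ∀ t ∈ Ico (0:ℝ) T, X t = a + (∫ s in (0:ℝ)..t, b (X s)) + g t) :
    MonotoneOn (X - g) (Ico 0 T) := fun t₁ h₁ t₂ h₂ h => by
  have := integral_eq_sub_of_eq_integral hb hXcont hX h₁ h₂
  have := intervalIntegral.integral_nonneg (μ := volume) h fun s _ => hb0 (X s)
  simp only [Pi.sub_apply]
  linarith

theorem sub_sub_le_mul_of_eq_integral (hb0 : ∀ x, 0 ≤ b x) (hb : Continuous b)
    (hbmono : MonotoneOn b (Ioi 0)) (hXcont : ContinuousOn X (Ico 0 T))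
    (hX : ∀ t ∈ Ico (0:ℝ) T, X t = a + (∫ s in (0:ℝ)..t, b (X s)) + g t)
    {t₁ t₂ G : ℝ} (h₁ : t₁ ∈ Ico 0 T) (h₂ : t₂ ∈ Ico 0 T) (h : t₁ ≤ t₂)
    (hG : ∀ t ∈ Icc t₁ t₂, |g t| ≤ G) (hpos : G < X t₁ - g t₁) :
    (X t₂ - g t₂) - (X t₁ - g t₁) ≤ (t₂ - t₁) * b (X t₂ - g t₂ + G) := by
  have hY := monotoneOn_sub_of_eq_integral hb0 hb hXcont hX
  have hsub : Icc t₁ t₂ ⊆ Ico 0 T := ordConnected_Ico.out h₁ h₂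
  have hbX : ∀ s ∈ Icc t₁ t₂, b (X s) ≤ b (X t₂ - g t₂ + G) := fun s hs => by
    have hlo : X t₁ - g t₁ ≤ X s - g s := hY h₁ (hsub hs) hs.1
    have hhi : X s - g s ≤ X t₂ - g t₂ := hY (hsub hs) h₂ hs.2
    have hgs := abs_le.1 (hG s hs)
    exact hbmono (mem_Ioi.2 (by linarith)) (mem_Ioi.2 (by linarith)) (by linarith)
  have hint : IntervalIntegrable (fun s => b (X s)) volume t₁ t₂ :=
    ((hb.comp_continuousOn hXcont).mono (ordConnected_Ico.uIcc_subset h₁ h₂)).intervalIntegrable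
  have := intervalIntegral.integral_mono_on h hint intervalIntegrable_const hbX
  rwa [intervalIntegral.integral_const, smul_eq_mul,
    integral_eq_sub_of_eq_integral hb hXcont hX h₁ h₂] at this

end IntegralEquation

theorem exists_mem_Ico_sub_eq_of_frequently_lt {g X : ℝ → ℝ} {T G : ℝ} (hT : 0 < T)
    (hg : Continuous g) (hXcont : ContinuousOn X (Ico 0 T)) (hG : ∀ t ∈ Icc 0 T, |g t| ≤ G)
    (hblow : ∀ M : ℝ, ∃ᶠ t in 𝓝[<] T, M < X t) {M : ℝ} (hM : X 0 - g 0 ≤ M) :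
    ∃ t ∈ Ico 0 T, X t - g t = M := by
  have hIco : ∀ᶠ t in 𝓝[<] T, t ∈ Ico 0 T :=
    (eventually_nhdsWithin_of_eventually_nhds (eventually_gt_nhds hT)).and self_mem_nhdsWithin
      |>.mono fun t ht => ⟨ht.1.le, ht.2⟩
  obtain ⟨u, hMu, hu⟩ := ((hblow (M + G)).and_eventually hIco).exists
  have hgu := abs_le.1 (hG u (Ico_subset_Icc_self hu))
  exact isPreconnected_Ico.intermediate_value (left_mem_Ico.2 hT) hu (hXcont.sub hg.continuousOn)
    ⟨hM, by simp only [Pi.sub_apply]; linarith⟩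

theorem stmt_1_general (b : ℝ → ℝ) (hb0 : ∀ x, 0 ≤ b x) (hbLip : LocallyLipschitz b)
    (hbmono : MonotoneOn b (Set.Ioi (0:ℝ)))
    (g : ℝ → ℝ) (hg : Continuous g) (a : ℝ)
    (T : ℝ) (hT : 0 < T) (X : ℝ → ℝ)
    (hXcont : ContinuousOn X (Set.Ico 0 T))
    (hX : ∀ t ∈ Set.Ico (0:ℝ) T, X t = a + (∫ s in (0:ℝ)..t, b (X s)) + g t)
    (hblow : ∀ M : ℝ, ∃ᶠ t in nhdsWithin T (Set.Iio T), M < X t) :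
    ∃ c > 0, (∫⁻ s in Set.Ioi c, (ENNReal.ofReal (b s))⁻¹) < ⊤ := by
  have hb : Continuous b := hbLip.continuous
  obtain ⟨G, hG⟩ : ∃ G, ∀ t ∈ Icc 0 T, |g t| ≤ G := by
    simpa only [Real.norm_eq_abs] using isCompact_Icc.exists_bound_of_continuousOn hg.continuousOn
  have hG0 : 0 ≤ G := (abs_nonneg _).trans (hG 0 ⟨le_rfl, hT.le⟩)
  have hY0 : X 0 - g 0 = a := by
    rw [hX 0 (left_mem_Ico.2 hT), intervalIntegral.integral_same]
    ring
  set c := |a| + 1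
  have hc : 0 < c := by positivity
  have hpow : ∀ k : ℕ, (1 : ℝ) ≤ 2 ^ k := fun k => one_le_pow₀ one_le_two
  choose τ hτ hYτ using fun k : ℕ =>
    exists_mem_Ico_sub_eq_of_frequently_lt hT hg hXcont hG hblow (M := G + c * 2 ^ k)
      (by nlinarith [le_abs_self a, hpow k])
  have hτmono : StrictMono τ := strictMono_nat_of_lt_succ fun k =>
    (monotoneOn_sub_of_eq_integral hb0 hb hXcont hX).reflect_lt (hτ k) (hτ (k + 1))
      (by simp only [Pi.sub_apply, hYτ, pow_succ]; nlinarith [hpow k])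
  refine ⟨G + c * 2 ^ (0 + 1) + G, by positivity,
    lintegral_Ioi_inv_lt_top_of_le_mul (B := fun k => G + c * 2 ^ (k + 1) + G) (C := 2) hb0 hbmono
      (by positivity) ?_ ?_ hτmono.monotone (fun k => (hτ k).2.le) fun k => ?_⟩
  · exact fun m n h => by dsimp only; gcongr; exact one_le_two
  · refine tendsto_atTop_add_const_right _ G <| tendsto_atTop_add_const_left _ G ?_
    exact ((tendsto_pow_atTop_atTop_of_one_lt one_lt_two).comp
      (tendsto_add_atTop_nat 1)).const_mul_atTop hc
  · have hblock := sub_sub_le_mul_of_eq_integral hb0 hb hbmono hXcont hX (hτ k) (hτ (k + 1))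
      (hτmono k.lt_succ_self).le
      (fun t ht => hG t ⟨(hτ k).1.trans ht.1, ht.2.trans (hτ (k + 1)).2.le⟩)
      (by rw [hYτ]; nlinarith [hpow k])
    rw [hYτ, hYτ] at hblock
    simp only [pow_succ] at hblock ⊢
    linarith

/-- If `X(t) = a + ∫₀ᵗ b(X(s)) ds + g(t)` blows up at a finite time `T`
(i.e. `limsup_{t→T⁻} X(t) = +∞`), then `b` satisfies the Osgood condition
`∫_c^∞ ds / b(s) < ∞` for some `c > 0` (with `1/0 = ∞`). -/
theorem stmt_1 (b : ℝ → ℝ) (hb0 : ∀ x, 0 ≤ b x) (hbLip : LocallyLipschitz b)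
    (hbmono : MonotoneOn b (Set.Ioi (0:ℝ)))
    (g : ℝ → ℝ) (hg : Continuous g) (a : ℝ) (ha : 0 ≤ a)
    (T : ℝ) (hT : 0 < T) (X : ℝ → ℝ)
    (hXcont : ContinuousOn X (Set.Ico 0 T))
    (hX : ∀ t ∈ Set.Ico (0:ℝ) T, X t = a + (∫ s in (0:ℝ)..t, b (X s)) + g t)
    (hblow : ∀ M : ℝ, ∃ᶠ t in nhdsWithin T (Set.Iio T), M < X t) :
    ∃ c > 0, (∫⁻ s in Set.Ioi c, (ENNReal.ofReal (b s))⁻¹) < ⊤ :=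
  stmt_1_general b hb0 hbLip hbmono g hg a T hT X hXcont hX hblow
end

section
/- Let b : ℝ → ℝ be nonnegative, locally Lipschitz and nondecreasing on (0,∞), let a ≥ 0, and let g : [0,∞) → ℝ be continuous with limsup_{t→∞} inf_{0≤h≤1} g(t+h) = ∞. If b satisfies the Osgood condition ∫_c^∞ 1/b(s) ds < ∞ for some c > 0, then the solution X of X(t) = a + ∫₀ᵗ b(X(s)) ds + g(t) blows up in finite time (no global solution exists). -/
/-!
Osgood's condition `∫_c^∞ 1/b < ∞` forces `b > 0` on `(c, ∞)` and makes the tail `∫_M^∞ 1/b`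
smaller than `1` for some `M > c`. Choose `t₀ ≥ 0` with `g > M` on `[t₀, t₀ + 1]`. There the
function `Y t = M + ∫_{t₀}^t b(X)` stays below `X`, so `Y' = b(X) ≥ b(Y)`: `Y` is a supersolution
of `y' = b(y)`, and therefore `t ↦ ∫_M^{Y t} 1/b - t` is nondecreasing. At `t₀ + 1` this gives
`∫_M^{Y(t₀+1)} 1/b ≥ 1`, contradicting the choice of `M`.
-/

open MeasureTheory Set Filter
open scoped ENNReal

theorem eventually_intervalIntegral_lt_of_integrableOn_Ioi {f : ℝ → ℝ} {c ε : ℝ}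
    (hf : IntegrableOn f (Ioi c)) (hf0 : ∀ s ∈ Ioi c, 0 ≤ f s) (hε : 0 < ε) :
    ∀ᶠ M in atTop, ∀ y, M ≤ y → ∫ s in M..y, f s < ε := by
  have htail : Tendsto (fun M ↦ ∫ s in Ioi M, f s) atTop (nhds 0) := by
    have hempty : ⋂ M : ℝ, Ioi M = ∅ := iInter_eq_empty_iff.2 fun x ↦ ⟨x, lt_irrefl x⟩
    simpa [hempty] using
      tendsto_setIntegral_of_antitone (fun M ↦ measurableSet_Ioi) antitone_Ioi ⟨c, hf⟩
  filter_upwards [htail.eventually_lt_const hε, eventually_ge_atTop c] with M hM hcM y hMy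
  have hfM : IntegrableOn f (Ioi M) := hf.mono_set (Ioi_subset_Ioi hcM)
  calc ∫ s in M..y, f s = ∫ s in Ioc M y, f s := intervalIntegral.integral_of_le hMy
    _ ≤ ∫ s in Ioi M, f s :=
        setIntegral_mono_set hfM
          ((ae_restrict_iff' measurableSet_Ioi).2
            (ae_of_all _ fun s hs ↦ hf0 s (lt_of_le_of_lt hcM hs)))
          Ioc_subset_Ioi_self.eventuallyLE
    _ < ε := hM

theorem hasDerivAt_integral_of_continuousOn_Ici {f : ℝ → ℝ} {a u t : ℝ}
    (hf : ContinuousOn f (Ici a)) (hu : a ≤ u) (ht : a < t) :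
    HasDerivAt (fun x ↦ ∫ s in u..x, f s) (f t) t :=
  intervalIntegral.integral_hasDerivAt_right
    ((hf.mono (ordConnected_Ici.uIcc_subset hu ht.le)).intervalIntegrable)
    ((hf.mono Ioi_subset_Ici_self).stronglyMeasurableAtFilter isOpen_Ioi t ht)
    (hf.continuousAt (Ici_mem_nhds ht))

theorem add_integral_le_of_eq_add_integral_add {f X g : ℝ → ℝ} {a t₀ t : ℝ} (ha : 0 ≤ a)
    (hf0 : ∀ s, 0 ≤ f s) (hf : ContinuousOn f (Ici 0)) (ht₀ : 0 ≤ t₀) (ht : t₀ ≤ t)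
    (hX : X t = a + (∫ s in (0:ℝ)..t, f s) + g t) :
    g t + ∫ s in t₀..t, f s ≤ X t := by
  have hint : ∀ u v : ℝ, 0 ≤ u → 0 ≤ v → IntervalIntegrable f volume u v :=
    fun u v hu hv ↦ (hf.mono (ordConnected_Ici.uIcc_subset hu hv)).intervalIntegrable
  rw [hX, ← intervalIntegral.integral_add_adjacent_intervals (hint 0 t₀ le_rfl ht₀)
    (hint t₀ t ht₀ (ht₀.trans ht))]
  have : 0 ≤ ∫ s in (0:ℝ)..t₀, f s :=
    intervalIntegral.integral_nonneg ht₀ fun s _ ↦ hf0 s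
  linarith

section Osgood

variable {b : ℝ → ℝ} {c : ℝ}

theorem pos_of_setLIntegral_ofReal_inv_ne_top (hb0 : ∀ x, 0 ≤ b x)
    (hmono : MonotoneOn b (Ioi c))
    (hI : ∫⁻ s in Ioi c, (ENNReal.ofReal (b s))⁻¹ ≠ ⊤) {y : ℝ} (hy : c < y) :
    0 < b y := by
  refine (hb0 y).lt_of_ne fun hby ↦ hI <|
    eq_top_mono (lintegral_mono_set (Ioc_subset_Ioi_self : Ioc c y ⊆ _)) ?_
  have hzero : ∀ s ∈ Ioc c y, (ENNReal.ofReal (b s))⁻¹ = ⊤ := fun s hs ↦ by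
    have : b s = 0 := le_antisymm ((hmono hs.1 hy hs.2).trans hby.ge) (hb0 s)
    simp [this]
  rw [setLIntegral_congr_fun measurableSet_Ioc hzero, setLIntegral_const, ENNReal.top_mul]
  simpa using hy

theorem integrableOn_inv_of_setLIntegral_ne_top (hb : Measurable b)
    (hpos : ∀ y ∈ Ioi c, 0 < b y)
    (hI : ∫⁻ s in Ioi c, (ENNReal.ofReal (b s))⁻¹ ≠ ⊤) :
    IntegrableOn (fun s ↦ (b s)⁻¹) (Ioi c) := by
  refine ⟨hb.inv.aestronglyMeasurable, ?_⟩
  rw [hasFiniteIntegral_iff_ofReal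
    ((ae_restrict_iff' measurableSet_Ioi).2 (ae_of_all _ fun s hs ↦ (inv_pos.2 (hpos s hs)).le))]
  rw [setLIntegral_congr_fun measurableSet_Ioi fun s hs ↦ ENNReal.ofReal_inv_of_pos (hpos s hs)]
  exact hI.lt_top

theorem sub_le_integral_inv_of_le_hasDerivAt {Y Y' : ℝ → ℝ} {t₀ t₁ : ℝ}
    (ht : t₀ ≤ t₁) (hb : ContinuousOn b (Ioi c)) (hbpos : ∀ y ∈ Ioi c, 0 < b y)
    (hYc : ContinuousOn Y (Icc t₀ t₁)) (hYmaps : MapsTo Y (Icc t₀ t₁) (Ioi c))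
    (hY' : ∀ t ∈ Ioo t₀ t₁, HasDerivAt Y (Y' t) t)
    (hle : ∀ t ∈ Ioo t₀ t₁, b (Y t) ≤ Y' t) :
    t₁ - t₀ ≤ ∫ y in Y t₀..Y t₁, (b y)⁻¹ := by
  set φ : ℝ → ℝ := fun y ↦ ∫ s in Y t₀..y, (b s)⁻¹
  have hbinv : ContinuousOn (fun s ↦ (b s)⁻¹) (Ioi c) :=
    hb.inv₀ fun y hy ↦ (hbpos y hy).ne'
  have hφ : ∀ y ∈ Ioi c, HasDerivAt φ (b y)⁻¹ y := fun y hy ↦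
    intervalIntegral.integral_hasDerivAt_right
      (hbinv.mono (ordConnected_Ioi.uIcc_subset (hYmaps (left_mem_Icc.2 ht)) hy)).intervalIntegrable
      (hbinv.stronglyMeasurableAtFilter isOpen_Ioi y hy)
      (hbinv.continuousAt (Ioi_mem_nhds hy))
  have hφc : ContinuousOn φ (Ioi c) := fun y hy ↦ (hφ y hy).continuousAt.continuousWithinAt
  have hmono : MonotoneOn (fun t ↦ φ (Y t) - t) (Icc t₀ t₁) := by
    refine monotoneOn_of_hasDerivWithinAt_nonneg (f' := fun t ↦ (b (Y t))⁻¹ * Y' t - 1)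
      (convex_Icc t₀ t₁) ((hφc.comp hYc hYmaps).sub continuousOn_id) (fun t ht ↦ ?_) (fun t ht ↦ ?_)
    all_goals rw [interior_Icc] at ht
    · exact (((hφ _ (hYmaps (Ioo_subset_Icc_self ht))).comp t (hY' t ht)).sub
        (hasDerivAt_id t)).hasDerivWithinAt
    · rw [sub_nonneg, one_le_inv_mul₀ (hbpos _ (hYmaps (Ioo_subset_Icc_self ht)))]
      exact hle t ht
  have := hmono (left_mem_Icc.2 ht) (right_mem_Icc.2 ht) ht
  simp only [φ, intervalIntegral.integral_same] at this
  linarith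

theorem exists_sub_le_integral_inv_of_eq_add_integral_add {X g : ℝ → ℝ} {a M t₀ t₁ : ℝ}
    (hb : Continuous b) (hb0 : ∀ x, 0 ≤ b x) (hbmono : MonotoneOn b (Ioi c))
    (hbpos : ∀ y ∈ Ioi c, 0 < b y) (ha : 0 ≤ a) (hcM : c < M) (ht₀ : 0 ≤ t₀)
    (ht : t₀ ≤ t₁) (hXc : ContinuousOn X (Ici 0))
    (hX : ∀ t, 0 ≤ t → X t = a + (∫ s in (0:ℝ)..t, b (X s)) + g t)
    (hgM : ∀ t ∈ Icc t₀ t₁, M < g t) :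
    ∃ y, M ≤ y ∧ t₁ - t₀ ≤ ∫ s in M..y, (b s)⁻¹ := by
  have hf : ContinuousOn (fun s ↦ b (X s)) (Ici 0) := hb.comp_continuousOn hXc
  set Y : ℝ → ℝ := fun t ↦ M + ∫ s in t₀..t, b (X s)
  have hMY : ∀ t, t₀ ≤ t → M ≤ Y t := fun t ht ↦
    le_add_of_nonneg_right (intervalIntegral.integral_nonneg ht fun s _ ↦ hb0 _)
  have hcY : ∀ t, t₀ ≤ t → c < Y t := fun t ht ↦ hcM.trans_le (hMY t ht)
  have hYX : ∀ t ∈ Icc t₀ t₁, Y t ≤ X t := fun t ht ↦ by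
    have := add_integral_le_of_eq_add_integral_add ha (fun s ↦ hb0 _) hf ht₀ ht.1
      (hX t (ht₀.trans ht.1))
    show M + _ ≤ X t
    linarith [hgM t ht]
  have hYc : ContinuousOn Y (Icc t₀ t₁) := by
    have hint : IntervalIntegrable (fun s ↦ b (X s)) volume t₀ t₁ :=
      (hf.mono (ordConnected_Ici.uIcc_subset ht₀ (ht₀.trans ht))).intervalIntegrable
    have := intervalIntegral.continuousOn_primitive_interval' hint left_mem_uIcc
    rw [uIcc_of_le ht] at this
    exact continuousOn_const.add this
  have hY' : ∀ t ∈ Ioo t₀ t₁, HasDerivAt Y (b (X t)) t := fun t ht ↦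
    (hasDerivAt_integral_of_continuousOn_Ici hf ht₀ (ht₀.trans_lt ht.1)).const_add M
  have hbYX : ∀ t ∈ Ioo t₀ t₁, b (Y t) ≤ b (X t) := fun t ht ↦
    have hYX := hYX t (Ioo_subset_Icc_self ht)
    hbmono (hcY t ht.1.le) ((hcY t ht.1.le).trans_le hYX) hYX
  have key := sub_le_integral_inv_of_le_hasDerivAt ht hb.continuousOn hbpos hYc
    (fun t ht ↦ hcY t ht.1) hY' hbYX
  have hYt₀ : Y t₀ = M := by simp [Y]
  exact ⟨Y t₁, hMY t₁ ht, hYt₀ ▸ key⟩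

end Osgood

theorem stmt_2_general (b : ℝ → ℝ) (hb0 : ∀ x, 0 ≤ b x) (hbLip : LocallyLipschitz b)
    (hbmono : MonotoneOn b (Set.Ioi (0:ℝ)))
    (a : ℝ) (ha : 0 ≤ a)
    (g : ℝ → ℝ)
    (hgrow : ∀ M : ℝ, ∃ᶠ t in atTop, ∀ h ∈ Set.Icc (0:ℝ) 1, M < g (t + h))
    (hosgood : ∃ c > 0, (∫⁻ s in Set.Ioi c, (ENNReal.ofReal (b s))⁻¹) < ⊤) :
    ¬ ∃ X : ℝ → ℝ, ContinuousOn X (Set.Ici 0) ∧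
      ∀ t : ℝ, 0 ≤ t → X t = a + (∫ s in (0:ℝ)..t, b (X s)) + g t := by
  rintro ⟨X, hXc, hX⟩
  obtain ⟨c, hc, hI⟩ := hosgood
  have hb : Continuous b := hbLip.continuous
  have hbmono_c : MonotoneOn b (Ioi c) := hbmono.mono (Ioi_subset_Ioi hc.le)
  have hbpos : ∀ y ∈ Ioi c, 0 < b y := fun y hy ↦
    pos_of_setLIntegral_ofReal_inv_ne_top hb0 hbmono_c hI.ne hy
  obtain ⟨M, hMtail, hcM⟩ := ((eventually_intervalIntegral_lt_of_integrableOn_Ioi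
    (integrableOn_inv_of_setLIntegral_ne_top hb.measurable hbpos hI.ne)
    (fun s hs ↦ (inv_pos.2 (hbpos s hs)).le) one_pos).and (eventually_gt_atTop c)).exists
  obtain ⟨t₀, ht₀, hgM⟩ := frequently_atTop.mp (hgrow M) 0
  obtain ⟨y, hMy, hy⟩ := exists_sub_le_integral_inv_of_eq_add_integral_add hb hb0 hbmono_c
    hbpos ha hcM ht₀ (by linarith : t₀ ≤ t₀ + 1) hXc hX fun t ht ↦ by
      simpa using hgM (t - t₀) ⟨by linarith [ht.1], by linarith [ht.2]⟩
  linarith [hMtail y hMy]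

/-- If `g` is continuous with `limsup_{t→∞} inf_{0≤h≤1} g(t+h) = ∞` and `b` satisfies the
Osgood condition, then no global solution of `X(t) = a + ∫₀ᵗ b(X(s)) ds + g(t)` exists. -/
theorem stmt_2 (b : ℝ → ℝ) (hb0 : ∀ x, 0 ≤ b x) (hbLip : LocallyLipschitz b)
    (hbmono : MonotoneOn b (Set.Ioi (0:ℝ)))
    (a : ℝ) (ha : 0 ≤ a)
    (g : ℝ → ℝ) (hg : ContinuousOn g (Set.Ici 0))
    (hgrow : ∀ M : ℝ, ∃ᶠ t in atTop, ∀ h ∈ Set.Icc (0:ℝ) 1, M < g (t + h))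
    (hosgood : ∃ c > 0, (∫⁻ s in Set.Ioi c, (ENNReal.ofReal (b s))⁻¹) < ⊤) :
    ¬ ∃ X : ℝ → ℝ, ContinuousOn X (Set.Ici 0) ∧
      ∀ t : ℝ, 0 ≤ t → X t = a + (∫ s in (0:ℝ)..t, b (X s)) + g t :=
  stmt_2_general b hb0 hbLip hbmono a ha g hgrow hosgood
end

section
/- Let b : ℝ → ℝ be nonnegative, locally Lipschitz and nondecreasing on (0,∞). Suppose X : [0,∞) → ℝ satisfies X(t) ≥ a + ∫₀ᵗ b(X(s)) ds for all t ∈ [0,T], where a > 0 and T := ∫_a^∞ 1/b(s) ds < ∞. Then X cannot be finite on all of [0,T]; i.e., X blows up by time T. -/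
open MeasureTheory Set Filter
open scoped ENNReal

/-!
If `b a = 0`, local Lipschitz continuity gives `b s ≤ K (s - a)` near `a`, so `1 / b` is not
integrable at `a`; hence `b > 0` on `[a, ∞)`. For `G t = a + ∫₀ᵗ b (X s) ds` we have `a ≤ G ≤ X`,
so `G' = b ∘ X ≥ b ∘ G` by monotonicity, and with `F y = ∫_a^y ds / b s` the function `F ∘ G` grows
at least at unit speed: `T ≤ F (G T)`. But `F y < ∫_a^∞ ds / b s = T` for every `y ≥ a`, because
`1 / b` has positive integral over `(y, ∞)`.
-/

lemma lintegral_Ioo_inv_ofReal_sub_eq_top {a c : ℝ} (hac : a < c) :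
    ∫⁻ s in Ioo a c, (ENNReal.ofReal (s - a))⁻¹ = ⊤ := by
  by_contra hfin
  have hint : IntegrableOn (fun s => (s - a)⁻¹) (Ioo a c) := by
    refine ⟨(by fun_prop : Measurable fun s : ℝ => (s - a)⁻¹).aestronglyMeasurable, ?_⟩
    rw [hasFiniteIntegral_iff_ofReal (ae_restrict_of_forall_mem measurableSet_Ioo
      fun s hs => inv_nonneg.2 (sub_pos.2 hs.1).le), lt_top_iff_ne_top]
    rwa [setLIntegral_congr_fun measurableSet_Ioo
      fun s hs => ENNReal.ofReal_inv_of_pos (sub_pos.2 hs.1)]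
  have := (intervalIntegrable_iff_integrableOn_Ioo_of_le hac.le).2 hint
  simp [hac.ne] at this

lemma lintegral_Ioi_inv_ofReal_eq_top_of_locallyLipschitz {f : ℝ → ℝ} (hf : LocallyLipschitz f)
    {a : ℝ} (ha : f a = 0) : ∫⁻ s in Ioi a, (ENNReal.ofReal (f s))⁻¹ = ⊤ := by
  obtain ⟨K, U, hU, hK⟩ := hf a
  obtain ⟨δ, hδ, hball⟩ := Metric.mem_nhds_iff.mp hU
  have hle : ∀ s ∈ Ioo a (a + δ),
      (K : ℝ≥0∞)⁻¹ * (ENNReal.ofReal (s - a))⁻¹ ≤ (ENNReal.ofReal (f s))⁻¹ := by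
    intro s hs
    have hsa : 0 < s - a := sub_pos.2 hs.1
    have hsU : s ∈ U := hball (by
      rw [Metric.mem_ball, Real.dist_eq, abs_of_pos hsa]; linarith [hs.2])
    have hfs : ENNReal.ofReal (f s) ≤ K * ENNReal.ofReal (s - a) :=
      calc ENNReal.ofReal (f s) ≤ edist (f s) (f a) := by
            rw [ha, edist_dist, Real.dist_eq, sub_zero]
            exact ENNReal.ofReal_le_ofReal (le_abs_self _)
        _ ≤ K * edist s a := hK hsU (hball (Metric.mem_ball_self hδ))
        _ = K * ENNReal.ofReal (s - a) := by rw [edist_dist, Real.dist_eq, abs_of_pos hsa]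
    rw [← ENNReal.mul_inv (by simp) (by simp)]
    exact ENNReal.inv_le_inv.2 hfs
  refine eq_top_iff.2 ?_
  calc ⊤ = (K : ℝ≥0∞)⁻¹ * ∫⁻ s in Ioo a (a + δ), (ENNReal.ofReal (s - a))⁻¹ := by
        rw [lintegral_Ioo_inv_ofReal_sub_eq_top (by linarith), ENNReal.mul_top (by simp)]
    _ = ∫⁻ s in Ioo a (a + δ), (K : ℝ≥0∞)⁻¹ * (ENNReal.ofReal (s - a))⁻¹ :=
        (lintegral_const_mul _ (by fun_prop)).symm
    _ ≤ ∫⁻ s in Ioo a (a + δ), (ENNReal.ofReal (f s))⁻¹ := setLIntegral_mono' measurableSet_Ioo hle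
    _ ≤ ∫⁻ s in Ioi a, (ENNReal.ofReal (f s))⁻¹ := lintegral_mono_set Ioo_subset_Ioi_self

lemma sub_le_integral_inv_of_le_deriv {b G g : ℝ → ℝ} {a t₀ t₁ : ℝ} (hb : Continuous b)
    (hbpos : ∀ y, a ≤ y → 0 < b y) (ht : t₀ ≤ t₁) (hGc : ContinuousOn G (Icc t₀ t₁))
    (hG : ∀ t ∈ Ioo t₀ t₁, HasDerivAt G (g t) t) (hGa : ∀ t ∈ Icc t₀ t₁, a ≤ G t)
    (hbg : ∀ t ∈ Ioo t₀ t₁, b (G t) ≤ g t) :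
    t₁ - t₀ ≤ ∫ s in G t₀..G t₁, (b s)⁻¹ := by
  set F : ℝ → ℝ := fun y => ∫ s in a..y, (b s)⁻¹
  have hint : ∀ y, a ≤ y → IntervalIntegrable (fun s => (b s)⁻¹) volume a y := fun y hy =>
    (hb.continuousOn.inv₀ fun s hs => (hbpos s (uIcc_of_le hy ▸ hs).1).ne').intervalIntegrable
  have hF : ∀ y, a ≤ y → HasDerivAt F (b y)⁻¹ y := fun y hy =>
    intervalIntegral.integral_hasDerivAt_right (hint y hy)
      hb.measurable.inv.aestronglyMeasurable.stronglyMeasurableAtFilter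
      (hb.continuousAt.inv₀ (hbpos y hy).ne')
  have hmono : MonotoneOn (fun t => F (G t) - t) (Icc t₀ t₁) := by
    refine monotoneOn_of_hasDerivWithinAt_nonneg (convex_Icc t₀ t₁)
      (f' := fun t => (b (G t))⁻¹ * g t - 1) ?_ (fun t ht => ?_) (fun t ht => ?_)
    · have hFc : ContinuousOn F (Ici a) := fun y hy => (hF y hy).continuousAt.continuousWithinAt
      exact (hFc.comp hGc hGa).sub continuousOn_id
    · rw [interior_Icc] at ht
      exact (((hF _ (hGa t (Ioo_subset_Icc_self ht))).comp t (hG t ht)).sub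
        (hasDerivAt_id t)).hasDerivWithinAt
    · rw [interior_Icc] at ht
      rw [sub_nonneg, le_inv_mul_iff₀ (hbpos _ (hGa t (Ioo_subset_Icc_self ht))), mul_one]
      exact hbg t ht
  have := hmono (left_mem_Icc.2 ht) (right_mem_Icc.2 ht) ht
  rw [← intervalIntegral.integral_interval_sub_left (hint _ (hGa _ (right_mem_Icc.2 ht)))
    (hint _ (hGa _ (left_mem_Icc.2 ht)))]
  dsimp only [F] at this
  linarith

lemma setLIntegral_Ioc_lt_setLIntegral_Ioi {f : ℝ → ℝ≥0∞} {a y : ℝ} (hf : Measurable f)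
    (hf0 : ∀ s, f s ≠ 0) (hay : a ≤ y) (hfin : ∫⁻ s in Ioi a, f s ≠ ⊤) :
    ∫⁻ s in Ioc a y, f s < ∫⁻ s in Ioi a, f s := by
  rw [← Ioc_union_Ioi_eq_Ioi hay, lintegral_union measurableSet_Ioi (Ioc_disjoint_Ioi le_rfl)]
    at hfin ⊢
  have htail : 0 < ∫⁻ s in Ioi y, f s := by
    rw [setLIntegral_pos_iff hf, Function.support_eq_univ hf0]
    simp
  exact ENNReal.lt_add_right (ENNReal.add_ne_top.1 hfin).1 htail.ne'

lemma integral_inv_lt_toReal_lintegral_Ioi {b : ℝ → ℝ} {a y : ℝ} (hb : Measurable b)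
    (hbpos : ∀ s ∈ Ioc a y, 0 < b s) (hay : a ≤ y)
    (hfin : ∫⁻ s in Ioi a, (ENNReal.ofReal (b s))⁻¹ ≠ ⊤) :
    ∫ s in a..y, (b s)⁻¹ < (∫⁻ s in Ioi a, (ENNReal.ofReal (b s))⁻¹).toReal := by
  have hlin : ∫ s in a..y, (b s)⁻¹ = (∫⁻ s in Ioc a y, (ENNReal.ofReal (b s))⁻¹).toReal := by
    rw [intervalIntegral.integral_of_le hay, integral_eq_lintegral_of_nonneg_ae
      (ae_restrict_of_forall_mem measurableSet_Ioc fun s hs => inv_nonneg.2 (hbpos s hs).le)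
      hb.inv.aestronglyMeasurable]
    congr 1
    exact setLIntegral_congr_fun measurableSet_Ioc fun s hs =>
      ENNReal.ofReal_inv_of_pos (hbpos s hs)
  rw [hlin]
  exact ENNReal.toReal_strict_mono hfin <| setLIntegral_Ioc_lt_setLIntegral_Ioi
    (ENNReal.measurable_ofReal.comp hb).inv (fun s => ENNReal.inv_ne_zero.2 ENNReal.ofReal_ne_top)
    hay hfin

/-- If `a > 0` and the Osgood integral `T = ∫_a^∞ ds / b(s)` is finite, then there is no
finite continuous function `X` on `[0,T]` with `X(t) ≥ a + ∫₀ᵗ b(X(s)) ds`;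
i.e. `X` blows up by time `T`. -/
theorem stmt_3 (b : ℝ → ℝ) (hb0 : ∀ x, 0 ≤ b x) (hbLip : LocallyLipschitz b)
    (hbmono : MonotoneOn b (Set.Ioi (0:ℝ)))
    (a : ℝ) (ha : 0 < a)
    (hfin : (∫⁻ s in Set.Ioi a, (ENNReal.ofReal (b s))⁻¹) ≠ ⊤)
    (T : ℝ) (hT : T = (∫⁻ s in Set.Ioi a, (ENNReal.ofReal (b s))⁻¹).toReal) :
    ¬ ∃ X : ℝ → ℝ, ContinuousOn X (Set.Icc 0 T) ∧
      ∀ t ∈ Set.Icc (0:ℝ) T, a + (∫ s in (0:ℝ)..t, b (X s)) ≤ X t := by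
  rintro ⟨X, hXc, hX⟩
  have hbc : Continuous b := hbLip.continuous
  have hba : 0 < b a := (hb0 a).lt_of_ne' fun h =>
    hfin (lintegral_Ioi_inv_ofReal_eq_top_of_locallyLipschitz hbLip h)
  have hbpos : ∀ s, a ≤ s → 0 < b s := fun s hs => hba.trans_le (hbmono ha (ha.trans_le hs) hs)
  have hT0 : 0 ≤ T := hT ▸ ENNReal.toReal_nonneg
  have hbX : ContinuousOn (fun s => b (X s)) (Icc 0 T) := hbc.comp_continuousOn hXc
  set G : ℝ → ℝ := fun t => a + ∫ s in (0:ℝ)..t, b (X s)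
  have hGc : ContinuousOn G (Icc 0 T) := by
    have := intervalIntegral.continuousOn_primitive_interval
      (uIcc_of_le hT0 ▸ hbX.integrableOn_Icc (μ := volume))
    exact (uIcc_of_le hT0 ▸ this).const_add a
  have hG : ∀ t ∈ Ioo 0 T, HasDerivAt G (b (X t)) t := fun t ht =>
    (intervalIntegral.integral_hasDerivAt_right
      (hbX.mono (uIcc_of_le ht.1.le ▸ Icc_subset_Icc_right ht.2.le)).intervalIntegrable
      ((hbX.mono Ioo_subset_Icc_self).stronglyMeasurableAtFilter isOpen_Ioo t ht)
      (hbX.continuousAt (Icc_mem_nhds ht.1 ht.2))).const_add a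
  have hGa : ∀ t ∈ Icc 0 T, a ≤ G t := fun t ht =>
    le_add_of_nonneg_right (intervalIntegral.integral_nonneg ht.1 fun s _ => hb0 _)
  have hbG : ∀ t ∈ Ioo 0 T, b (G t) ≤ b (X t) := fun t ht =>
    have hGt := hGa t (Ioo_subset_Icc_self ht)
    hbmono (ha.trans_le hGt) (ha.trans_le (hGt.trans (hX t (Ioo_subset_Icc_self ht))))
      (hX t (Ioo_subset_Icc_self ht))
  have hle := sub_le_integral_inv_of_le_deriv hbc hbpos hT0 hGc hG hGa hbG
  have hlt := integral_inv_lt_toReal_lintegral_Ioi hbc.measurable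
    (fun s hs => hbpos s hs.1.le) (hGa T (right_mem_Icc.2 hT0)) hfin
  simp only [G, intervalIntegral.integral_same, add_zero] at hle hlt
  linarith
end

section
/- Let g : [0,∞) × [0,1] → ℝ be continuous, let ψ(t) = t^{1/4}√(2 log log t) for t > e, and suppose: (i) limsup_{t→∞} g(t, x₀)/ψ(t) = 1 for some fixed x₀ ∈ [0,1], and (ii) sup_{s,t ∈ [n, n+2], x,y ∈ [0,1]} |g(t,x) − g(s,y)| / ψ(n) → 0 as n → ∞ over integers n. Then there exists a sequence t_n → ∞ such that inf_{h∈[0,1], x∈[0,1]} g(t_n + h, x) → ∞. -/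
/-!
Along a sequence `t_n → ∞` on which the law of the iterated logarithm is nearly attained,
`g(t_n, x₀) > ψ(t_n)/2`. Every point `(t_n + h, x)` lies in the same strip
`[⌊t_n⌋, ⌊t_n⌋ + 2] × [0,1]` as `(t_n, x₀)`, and there the oscillation of `g` is
eventually below `ψ(⌊t_n⌋)/4`. Since `ψ` is increasing, `g(t_n + h, x) > ψ(⌊t_n⌋)/4 → ∞`.
-/

open Real Set Filter

noncomputable def psi (t : ℝ) : ℝ := t ^ ((1:ℝ)/4) * √(2 * log (log t))

lemma psi_nonneg {t : ℝ} (ht : 0 ≤ t) : 0 ≤ psi t :=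
  mul_nonneg (rpow_nonneg ht _) (sqrt_nonneg _)

lemma monotoneOn_psi : MonotoneOn psi (Ioi 1) := by
  intro s (hs : 1 < s) t _ hst
  have hlog : log (log s) ≤ log (log t) :=
    log_le_log (log_pos hs) (log_le_log (by linarith) hst)
  exact mul_le_mul (rpow_le_rpow (by linarith) hst (by norm_num))
    (sqrt_le_sqrt (by linarith)) (sqrt_nonneg _) (rpow_nonneg (by linarith) _)

lemma tendsto_psi_atTop : Tendsto psi atTop atTop :=
  (tendsto_rpow_atTop (by norm_num)).atTop_mul_atTop₀ <| tendsto_sqrt_atTop.comp <|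
    (tendsto_log_atTop.comp tendsto_log_atTop).const_mul_atTop two_pos

noncomputable def stripOscillation (g : ℝ → ℝ → ℝ) (a : ℝ) : ℝ :=
  sSup {v : ℝ | ∃ s ∈ Icc a (a + 2), ∃ t ∈ Icc a (a + 2),
    ∃ x ∈ Icc (0:ℝ) 1, ∃ y ∈ Icc (0:ℝ) 1, v = |g t x - g s y|}

lemma abs_sub_le_stripOscillation {g : ℝ → ℝ → ℝ} {a : ℝ}
    (hg : ContinuousOn (Function.uncurry g) (Icc a (a + 2) ×ˢ Icc (0:ℝ) 1))
    {s t x y : ℝ} (hs : s ∈ Icc a (a + 2)) (ht : t ∈ Icc a (a + 2))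
    (hx : x ∈ Icc (0:ℝ) 1) (hy : y ∈ Icc (0:ℝ) 1) :
    |g t x - g s y| ≤ stripOscillation g a := by
  obtain ⟨C, hC⟩ := (isCompact_Icc.prod isCompact_Icc).exists_bound_of_continuousOn hg
  refine le_csSup ⟨2 * C, ?_⟩ ⟨s, hs, t, ht, x, hx, y, hy, rfl⟩
  rintro v ⟨s', hs', t', ht', x', hx', y', hy', rfl⟩
  have hgt := hC (t', x') ⟨ht', hx'⟩
  have hgs := hC (s', y') ⟨hs', hy'⟩
  simp only [Function.uncurry_apply_pair, norm_eq_abs] at hgt hgs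
  linarith [abs_sub (g t' x') (g s' y')]

lemma sub_stripOscillation_floor_le {g : ℝ → ℝ → ℝ} {x₀ : ℝ} (hx₀ : x₀ ∈ Icc (0:ℝ) 1)
    (hg : ContinuousOn (Function.uncurry g) (Ici (0:ℝ) ×ˢ Icc (0:ℝ) 1))
    {t h x : ℝ} (ht : 0 ≤ t) (hh : h ∈ Icc (0:ℝ) 1) (hx : x ∈ Icc (0:ℝ) 1) :
    g t x₀ - stripOscillation g ⌊t⌋₊ ≤ g (t + h) x := by
  have hfloor : (⌊t⌋₊ : ℝ) ≤ t := Nat.floor_le ht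
  have hfloor' : t < ⌊t⌋₊ + 1 := Nat.lt_floor_add_one t
  have hstrip : Icc (⌊t⌋₊ : ℝ) (⌊t⌋₊ + 2) ×ˢ Icc (0:ℝ) 1 ⊆ Ici (0:ℝ) ×ˢ Icc (0:ℝ) 1 :=
    prod_mono_left fun u hu => (Nat.cast_nonneg _).trans hu.1
  have := abs_sub_le_stripOscillation (hg.mono hstrip)
    (⟨hfloor, by linarith⟩ : t ∈ Icc (⌊t⌋₊ : ℝ) (⌊t⌋₊ + 2))
    (⟨by linarith [hh.1], by linarith [hh.2]⟩ : t + h ∈ Icc (⌊t⌋₊ : ℝ) (⌊t⌋₊ + 2)) hx hx₀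
  linarith [neg_abs_le (g (t + h) x - g t x₀)]

lemma frequently_lt_of_limsup_div_eq_one {u v : ℝ → ℝ} (hv : ∀ᶠ t in atTop, 0 ≤ v t)
    (h : limsup (fun t => u t / v t) atTop = 1) : ∃ᶠ t in atTop, v t / 2 < u t := by
  -- A real limsup that is not cobounded is `0` by convention, so `h` forces coboundedness.
  have hcobdd : IsCoboundedUnder (· ≤ ·) atTop fun t => u t / v t := by
    by_contra hnot
    simp [limsup_of_not_isCoboundedUnder hnot] at h
  have hfreq : ∃ᶠ t in atTop, 1 / 2 < u t / v t :=
    frequently_lt_of_lt_limsup hcobdd (by rw [h]; norm_num)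
  refine (hfreq.and_eventually hv).mono fun t ⟨hlt, hvt⟩ => ?_
  have hvpos : 0 < v t := hvt.lt_of_ne fun h0 => by norm_num [← h0] at hlt
  rw [lt_div_iff₀ hvpos] at hlt
  linarith

/-- Deterministic core of Proposition `sup2`: if a continuous `g` on `[0,∞)×[0,1]`
satisfies the law of iterated logarithm `limsup_{t→∞} g(t,x₀)/ψ(t) = 1` (with
`ψ(t) = t^{1/4}√(2 log log t)`) and the oscillation over `[n,n+2]×[0,1]²` is `o(ψ(n))`,
then there is a sequence `t_n → ∞` with `inf_{h∈[0,1],x∈[0,1]} g(t_n+h,x) → ∞`. -/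
theorem stmt_10 (g : ℝ → ℝ → ℝ) (x₀ : ℝ) (hx₀ : x₀ ∈ Set.Icc (0:ℝ) 1)
    (hcont : ContinuousOn (fun p : ℝ × ℝ => g p.1 p.2) (Set.Ici (0:ℝ) ×ˢ Set.Icc (0:ℝ) 1))
    (hlil : Filter.limsup
      (fun t : ℝ => g t x₀ / (t ^ ((1:ℝ)/4) * Real.sqrt (2 * Real.log (Real.log t))))
      Filter.atTop = 1)
    (hosc : Filter.Tendsto (fun n : ℕ =>
        (sSup {v : ℝ | ∃ s ∈ Set.Icc (n:ℝ) ((n:ℝ)+2), ∃ t ∈ Set.Icc (n:ℝ) ((n:ℝ)+2),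
            ∃ x ∈ Set.Icc (0:ℝ) 1, ∃ y ∈ Set.Icc (0:ℝ) 1, v = |g t x - g s y|}) /
          ((n:ℝ) ^ ((1:ℝ)/4) * Real.sqrt (2 * Real.log (Real.log (n:ℝ)))))
      Filter.atTop (nhds 0)) :
    ∃ T : ℕ → ℝ, Filter.Tendsto T Filter.atTop Filter.atTop ∧
      ∀ M : ℝ, ∀ᶠ n in Filter.atTop,
        ∀ h ∈ Set.Icc (0:ℝ) 1, ∀ x ∈ Set.Icc (0:ℝ) 1, M ≤ g (T n + h) x := by
  have hosc' : Tendsto (fun n : ℕ => stripOscillation g n / psi n) atTop (nhds 0) := hosc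
  have hfreq : ∃ᶠ t in atTop, psi t / 2 < g t x₀ :=
    frequently_lt_of_limsup_div_eq_one ((eventually_ge_atTop 0).mono fun _ => psi_nonneg) hlil
  choose T hTn hTg using fun n : ℕ => frequently_atTop.mp hfreq n
  have hT : Tendsto T atTop atTop := tendsto_atTop_mono hTn tendsto_natCast_atTop_atTop
  refine ⟨T, hT, fun M => ?_⟩
  have hpsi := tendsto_psi_atTop.comp tendsto_natCast_atTop_atTop
  have hgood : ∀ᶠ m : ℕ in atTop, 2 ≤ m ∧ 0 < psi m ∧ 4 * M ≤ psi m ∧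
      stripOscillation g m / psi m < 1 / 4 :=
    (eventually_ge_atTop 2).and <| (hpsi.eventually_gt_atTop 0).and <|
      (hpsi.eventually_ge_atTop _).and <| hosc'.eventually_lt_const (by norm_num)
  filter_upwards [(tendsto_nat_floor_atTop.comp hT).eventually hgood, hT.eventually_ge_atTop 0]
    with n ⟨hm2, hpsi_pos, hpsiM, hosc_small⟩ hT0 h hh x hx
  simp only [Function.comp_apply] at hm2 hpsi_pos hpsiM hosc_small
  rw [div_lt_iff₀ hpsi_pos] at hosc_small
  have hfloor : (⌊T n⌋₊ : ℝ) ≤ T n := Nat.floor_le hT0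
  have hfloor_gt : (1 : ℝ) < ⌊T n⌋₊ := by exact_mod_cast hm2
  have hmono : psi ⌊T n⌋₊ ≤ psi (T n) :=
    monotoneOn_psi hfloor_gt (hfloor_gt.trans_le hfloor) hfloor
  linarith [sub_stripOscillation_floor_le hx₀ hcont hT0 hh hx, hTg n]
end
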